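/- Let y : ℝ → ℝ be a twice differentiable function satisfying ÿ(t) = y(t) ẏ(t) √(1 − ẏ(t)²) with |ẏ(t)| < 1 for all t, and set c = y(0)²/2 − arcsin(ẏ(0)). Then for all t: 2c − π ≤ y(t)² ≤ 2c + π. In particular y is bounded, so the corresponding geodesic of the vector field V = y ∂_x in the plane is confined to a horizontal strip; consequently two points of ℝ² lying in different geodesic strips cannot be joined by such a geodesic, and the Hopf–Rinow theorem fails for metric connections with vectorial torsion. -/

import Mathlib

/-!
Writing `ÿ = y ẏ √(1 − ẏ²)` as `(arcsin ẏ)˙ = ÿ / √(1 − ẏ²) = y ẏ = (y²/2)˙` shows that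
`y²/2 − arcsin ẏ` is constant along a solution, so it equals `c`. Since `arcsin` takes values in
`[−π/2, π/2]`, this pins `y²/2` to `[c − π/2, c + π/2]`.
-/

open Real

theorem HasDerivAt.arcsin {f : ℝ → ℝ} {f' t : ℝ} (hf : HasDerivAt f f' t) (hft : |f t| < 1) :
    HasDerivAt (fun s => arcsin (f s)) (f' / √(1 - f t ^ 2)) t := by
  obtain ⟨hlo, hhi⟩ := abs_lt.mp hft
  have := (hasDerivAt_arcsin hlo.ne' hhi.ne).comp t hf
  rwa [one_div_mul_eq_div] at this

theorem hasDerivAt_comp_sub_arcsin_deriv_eq_zero {G g y : ℝ → ℝ} {t : ℝ}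
    (hG : HasDerivAt G (g (y t)) (y t)) (hy : DifferentiableAt ℝ y t)
    (hy' : DifferentiableAt ℝ (deriv y) t) (hbound : |deriv y t| < 1)
    (hODE : deriv (deriv y) t = g (y t) * deriv y t * √(1 - deriv y t ^ 2)) :
    HasDerivAt (fun s => G (y s) - arcsin (deriv y s)) 0 t := by
  have hsqrt : √(1 - deriv y t ^ 2) ≠ 0 :=
    (sqrt_pos.mpr (sub_pos.mpr ((sq_lt_one_iff_abs_lt_one _).mpr hbound))).ne'
  refine ((hG.comp t hy.hasDerivAt).sub (hy'.hasDerivAt.arcsin hbound)).congr_deriv ?_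
  rw [hODE, mul_div_cancel_right₀ _ hsqrt, sub_self]

theorem comp_sub_arcsin_deriv_eq_of_ode {G g y : ℝ → ℝ} (hG : ∀ x, HasDerivAt G (g x) x)
    (hy : Differentiable ℝ y) (hy' : Differentiable ℝ (deriv y))
    (hbound : ∀ t, |deriv y t| < 1)
    (hODE : ∀ t, deriv (deriv y) t = g (y t) * deriv y t * √(1 - deriv y t ^ 2)) (t : ℝ) :
    G (y t) - arcsin (deriv y t) = G (y 0) - arcsin (deriv y 0) := by
  have hstat (s : ℝ) := hasDerivAt_comp_sub_arcsin_deriv_eq_zero (hG (y s)) (hy s) (hy' s)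
    (hbound s) (hODE s)
  exact is_const_of_deriv_eq_zero (fun s => (hstat s).differentiableAt)
    (fun s => (hstat s).deriv) t 0

theorem sq_mem_strip_of_half_sq_sub_arcsin_eq {a b c : ℝ} (h : a ^ 2 / 2 - arcsin b = c) :
    2 * c - π ≤ a ^ 2 ∧ a ^ 2 ≤ 2 * c + π := by
  have hlo := neg_pi_div_two_le_arcsin b
  have hhi := arcsin_le_pi_div_two b
  constructor <;> linarith

/-- A solution of the ODE `ÿ = y ẏ √(1 − ẏ²)` with `|ẏ| < 1` is confined to the strip
`2c − π ≤ y² ≤ 2c + π`, where `c = y(0)²/2 − arcsin ẏ(0)`: geodesics of the vectorial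
torsion connection of `V = y ∂_x` stay in horizontal strips, so two points in different
strips cannot be joined by a geodesic and the Hopf–Rinow theorem fails. -/
theorem y_ODE_bounded_strip
    (y : ℝ → ℝ)
    (hy : Differentiable ℝ y) (hy' : Differentiable ℝ (deriv y))
    (hbound : ∀ t : ℝ, |deriv y t| < 1)
    (hODE : ∀ t : ℝ, deriv (deriv y) t
        = y t * deriv y t * Real.sqrt (1 - (deriv y t) ^ 2))
    (c : ℝ) (hc : c = (y 0) ^ 2 / 2 - Real.arcsin (deriv y 0)) :
    ∀ t : ℝ, 2 * c - Real.pi ≤ (y t) ^ 2 ∧ (y t) ^ 2 ≤ 2 * c + Real.pi := by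
  have hG (x : ℝ) : HasDerivAt (fun x => x ^ 2 / 2) x x := by
    simpa using (hasDerivAt_pow 2 x).div_const 2
  intro t
  apply sq_mem_strip_of_half_sq_sub_arcsin_eq
  rw [hc]
  exact comp_sub_arcsin_deriv_eq_of_ode hG hy hy' hbound hODE t
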